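/- arXiv:2002.07553 — 5 statements merged into one kernel-verified Lean document; each statement's English description precedes it below -/
import Mathlib

section
/- Suppose A is a finite set partitioned among p processors such that processor i receives a set A_i of 'regular' elements with Σ_{a∈A_i} W_a ≤ W/p plus at most one additional 'overload' element, where W_a = w_a + o_a·(w'/m'), W = Σ_{a∈A} W_a, and every element has w_a ≤ ŵ and o_a ≤ m̂. Then every processor's total work is at most 2w'/p + ŵ and its total output volume is at most 2m'/p + m̂. -/
theorem partition_balance {α : Type*} (A : Finset α) (w o : α → ℝ)
    (hw : ∀ a ∈ A, 0 ≤ w a) (ho : ∀ a ∈ A, 0 ≤ o a)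
    (wHat mHat : ℝ) (hwHat : ∀ a ∈ A, w a ≤ wHat) (hmHat : ∀ a ∈ A, o a ≤ mHat)
    (w' m' : ℝ) (hw' : w' = ∑ a ∈ A, w a) (hm' : m' = ∑ a ∈ A, o a)
    (hw'pos : 0 < w') (hm'pos : 0 < m')
    (W : α → ℝ) (hW : ∀ a, W a = w a + o a * (w' / m'))
    (Wtot : ℝ) (hWtot : Wtot = ∑ a ∈ A, W a)
    (p : ℕ) (hp : 0 < p)
    (R : Fin p → Finset α) (hR : ∀ i, R i ⊆ A)
    (ov : Fin p → Option α) (hov : ∀ i, ∀ a ∈ (ov i), a ∈ A)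
    (hbal : ∀ i, ∑ a ∈ R i, W a ≤ Wtot / p) :
    ∀ i, (∑ a ∈ R i, w a) + ((ov i).elim 0 w) ≤ 2 * w' / p + wHat ∧
      (∑ a ∈ R i, o a) + ((ov i).elim 0 o) ≤ 2 * m' / p + mHat := by
  have hratio : 0 ≤ w' / m' := le_of_lt (div_pos hw'pos hm'pos)
  have hA : A.Nonempty := by
    by_contra h
    rw [Finset.not_nonempty_iff_eq_empty] at h
    rw [h, Finset.sum_empty] at hw'
    linarith
  obtain ⟨a0, ha0⟩ := hA
  have hwHat0 : 0 ≤ wHat := le_trans (hw a0 ha0) (hwHat a0 ha0)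
  have hmHat0 : 0 ≤ mHat := le_trans (ho a0 ha0) (hmHat a0 ha0)
  have hWtot2 : Wtot = 2 * w' := by
    rw [hWtot]
    simp only [hW]
    rw [Finset.sum_add_distrib, ← Finset.sum_mul, ← hw', ← hm']
    field_simp
    ring
  have hp' : (0:ℝ) < p := by exact_mod_cast hp
  intro i
  have hbal' : ∑ a ∈ R i, W a ≤ 2 * w' / p := by
    have := hbal i; rwa [hWtot2] at this
  constructor
  · have h1 : ∑ a ∈ R i, w a ≤ ∑ a ∈ R i, W a := by
      apply Finset.sum_le_sum
      intro a ha
      rw [hW a]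
      have := ho a (hR i ha)
      nlinarith
    have h2 : (ov i).elim 0 w ≤ wHat := by
      cases h : ov i with
      | none => simpa using hwHat0
      | some a => exact hwHat a (hov i a (by simp [h]))
    linarith
  · have h1 : (∑ a ∈ R i, o a) * (w' / m') ≤ ∑ a ∈ R i, W a := by
      rw [Finset.sum_mul]
      apply Finset.sum_le_sum
      intro a ha
      rw [hW a]
      have := hw a (hR i ha)
      linarith
    have h3 : (∑ a ∈ R i, o a) * (w' / m') ≤ 2 * w' / p := le_trans h1 hbal'
    have h3' : (∑ a ∈ R i, o a) * w' * p ≤ 2 * w' * m' := by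
      rw [mul_div_assoc'] at h3
      rw [div_le_div_iff₀ hm'pos hp'] at h3
      linarith
    have h4 : ∑ a ∈ R i, o a ≤ 2 * m' / p := by
      rw [le_div_iff₀ hp']
      nlinarith [hw'pos]
    have h2 : (ov i).elim 0 o ≤ mHat := by
      cases h : ov i with
      | none => simpa using hmHat0
      | some a => exact hmHat a (hov i a (by simp [h]))
    linarith
end

section
/- When randomly and independently placing n balls into p bins uniformly, if n ≥ p, the expected maximum bin load is O(n/p + log p); in particular there exists a constant C such that the expected maximum load is at most C·(n/p + log p). -/
open Finset

lemma card_fixed (n p : ℕ) (j : Fin p) (A : Finset (Fin n)) :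
    (Finset.univ.filter fun f : Fin n → Fin p => ∀ i ∈ A, f i = j).card
      = p ^ (n - A.card) := by
  have e : {f : Fin n → Fin p // ∀ i ∈ A, f i = j} ≃ ({i : Fin n // i ∉ A} → Fin p) :=
    { toFun := fun f i => f.1 i.1
      invFun := fun g => ⟨fun i => if h : i ∈ A then j else g ⟨i, h⟩, fun i hi => by simp [hi]⟩
      left_inv := fun f => by
        ext i
        by_cases h : i ∈ A <;> simp [h, f.2 i]
      right_inv := fun g => by
        ext i
        simp [i.2] }
  have h1 : (Finset.univ.filter fun f : Fin n → Fin p => ∀ i ∈ A, f i = j).card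
      = Fintype.card {f : Fin n → Fin p // ∀ i ∈ A, f i = j} :=
    (Fintype.card_subtype _).symm
  rw [h1, Fintype.card_congr e, Fintype.card_fun]
  congr 1
  · simp
  · rw [Fintype.card_congr (Equiv.subtypeEquivRight (fun x => (Finset.mem_compl (s := A)).symm)),
      Fintype.card_coe, Finset.card_compl, Fintype.card_fin]

lemma card_load_ge (n p k : ℕ) (j : Fin p) :
    (Finset.univ.filter fun f : Fin n → Fin p =>
      k ≤ (Finset.univ.filter fun i => f i = j).card).card ≤ n.choose k * p ^ (n - k) := by
  have hsub : (Finset.univ.filter fun f : Fin n → Fin p =>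
      k ≤ (Finset.univ.filter fun i => f i = j).card)
      ⊆ (Finset.powersetCard k (Finset.univ : Finset (Fin n))).biUnion
          (fun A => Finset.univ.filter fun f => ∀ i ∈ A, f i = j) := by
    intro f hf
    simp only [mem_filter, mem_univ, true_and] at hf
    obtain ⟨A, hA, hAcard⟩ := Finset.exists_subset_card_eq hf
    refine Finset.mem_biUnion.2 ⟨A, ?_, ?_⟩
    · exact Finset.mem_powersetCard.2 ⟨Finset.subset_univ _, hAcard⟩
    · simp only [mem_filter, mem_univ, true_and]
      intro i hi
      have := hA hi
      simpa using (Finset.mem_filter.1 this).2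
  calc _ ≤ _ := Finset.card_le_card hsub
    _ ≤ ∑ A ∈ Finset.powersetCard k (Finset.univ : Finset (Fin n)),
        (Finset.univ.filter fun f : Fin n → Fin p => ∀ i ∈ A, f i = j).card :=
      Finset.card_biUnion_le
    _ = n.choose k * p ^ (n - k) := by
      rw [Finset.sum_congr rfl (fun A hA => ?_), Finset.sum_const, smul_eq_mul,
        Finset.card_powersetCard, Finset.card_univ, Fintype.card_fin]
      rw [card_fixed, (Finset.mem_powersetCard.1 hA).2]

lemma bib_pow_le_fact (k : ℕ) : (k:ℝ)^k ≤ 3^k * k.factorial := by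
  induction k with
  | zero => norm_num
  | succ k ih =>
    rcases Nat.eq_zero_or_pos k with hk | hk
    · subst hk; norm_num
    have hk' : (0:ℝ) < k := by exact_mod_cast hk
    have h1 : ((k:ℝ)+1)^k ≤ 3 * (k:ℝ)^k := by
      have he : ((k:ℝ)+1) ≤ k * Real.exp (1/k) := by
        have := Real.add_one_le_exp (1/(k:ℝ))
        calc ((k:ℝ)+1) = k * (1 + 1/k) := by field_simp
          _ ≤ k * Real.exp (1/k) := by nlinarith
      calc ((k:ℝ)+1)^k ≤ ((k:ℝ) * Real.exp (1/k))^k := by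
            apply pow_le_pow_left₀ (by positivity) he
        _ = (k:ℝ)^k * Real.exp (1/k)^k := mul_pow _ _ _
        _ = (k:ℝ)^k * Real.exp 1 := by
            rw [← Real.exp_nat_mul]; congr 1; field_simp
        _ ≤ 3 * (k:ℝ)^k := by
            have := Real.exp_one_lt_d9
            nlinarith [pow_pos hk' k]
    have h2 : (0:ℝ) ≤ (k:ℝ)+1 := by positivity
    calc ((k+1:ℕ):ℝ)^(k+1) = ((k:ℝ)+1) * ((k:ℝ)+1)^k := by push_cast; ring
      _ ≤ ((k:ℝ)+1) * (3 * (k:ℝ)^k) := by nlinarith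
      _ ≤ ((k:ℝ)+1) * (3 * (3^k * k.factorial)) := by
          have := ih; nlinarith
      _ = 3^(k+1) * ((k+1) * k.factorial) := by push_cast; ring
      _ = 3^(k+1) * (k+1).factorial := by rw [Nat.factorial_succ]; push_cast; ring

lemma bib_key (n p k : ℕ) (hp : 1 ≤ p) (hk : 6*n ≤ p*k) :
    (n.choose k : ℝ) ≤ (1/2)^k * (p:ℝ)^k := by
  rcases Nat.eq_zero_or_pos k with h0 | h0
  · subst h0; simp
  have hkR : (0:ℝ) < k := by exact_mod_cast h0
  have hpR : (0:ℝ) < p := by exact_mod_cast hp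
  have hcf : (n.choose k : ℝ) * k.factorial ≤ (n:ℝ)^k := by
    have := Nat.descFactorial_le_pow n k
    rw [Nat.descFactorial_eq_factorial_mul_choose] at this
    calc (n.choose k : ℝ) * k.factorial
        = ((k.factorial * n.choose k : ℕ) : ℝ) := by push_cast; ring
      _ ≤ ((n^k : ℕ):ℝ) := by exact_mod_cast this
      _ = (n:ℝ)^k := by push_cast; ring
  have hfact := bib_pow_le_fact k
  have hfpos : (0:ℝ) < k.factorial := by exact_mod_cast k.factorial_pos
  -- choose ≤ n^k / k! ≤ (3n/k)^k
  have h1 : (n.choose k : ℝ) ≤ (3*n/k)^k := by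
    rw [div_pow]
    rw [le_div_iff₀ (by positivity)]
    calc (n.choose k : ℝ) * (k:ℝ)^k ≤ (n.choose k : ℝ) * (3^k * k.factorial) := by
          have : (0:ℝ) ≤ (n.choose k : ℝ) := by positivity
          nlinarith
      _ = 3^k * ((n.choose k : ℝ) * k.factorial) := by ring
      _ ≤ 3^k * (n:ℝ)^k := by nlinarith [pow_pos (show (0:ℝ) < 3 by norm_num) k]
      _ = (3*(n:ℝ))^k := by rw [mul_pow]
  have h2 : (3*(n:ℝ)/k) ≤ 1/2 * p := by
    rw [div_le_iff₀ hkR]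
    have : (6:ℝ)*n ≤ p*k := by exact_mod_cast hk
    nlinarith
  calc (n.choose k : ℝ) ≤ (3*n/k)^k := h1
    _ ≤ (1/2 * p)^k := pow_le_pow_left₀ (by positivity) h2 k
    _ = (1/2)^k * (p:ℝ)^k := mul_pow _ _ _

/-- Expected maximum bin load when placing `n` balls independently and
uniformly at random into `p` bins (average of the max load over all `p^n`
equally likely placements). -/
noncomputable def expMaxOcc (n p : ℕ) : ℝ :=
  (∑ f : Fin n → Fin p,
    (((Finset.univ.sup fun j : Fin p =>
      (Finset.univ.filter fun i : Fin n => f i = j).card) : ℕ) : ℝ)) / (p : ℝ) ^ n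

theorem balls_into_bins_expected_max :
    ∃ C : ℝ, ∀ n p : ℕ, 1 ≤ p → p ≤ n →
      expMaxOcc n p ≤ C * ((n : ℝ) / p + Real.log p) := by
  use 100
  intro n p hp hpn
  set M : (Fin n → Fin p) → ℕ := fun f =>
    Finset.univ.sup fun j : Fin p =>
      (Finset.univ.filter fun i : Fin n => f i = j).card with hM
  have hMle : ∀ f, M f ≤ n := by
    intro f
    apply Finset.sup_le
    intro j _
    calc (Finset.univ.filter fun i : Fin n => f i = j).card
        ≤ (Finset.univ : Finset (Fin n)).card := Finset.card_le_card (filter_subset _ _)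
      _ = n := by simp
  -- layer cake
  have hlayer : ∑ f : Fin n → Fin p, M f
      = ∑ s ∈ range n, (Finset.univ.filter fun f : Fin n → Fin p => s < M f).card := by
    have h1 : ∀ f : Fin n → Fin p, M f = ∑ s ∈ range n, if s < M f then 1 else 0 := by
      intro f
      rw [← Finset.card_filter]
      have : (range n).filter (fun s => s < M f) = range (M f) := by
        ext x
        simp only [mem_filter, mem_range]
        have := hMle f
        omega
      rw [this, Finset.card_range]
    calc ∑ f : Fin n → Fin p, M f
        = ∑ f : Fin n → Fin p, ∑ s ∈ range n, if s < M f then 1 else 0 :=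
          Finset.sum_congr rfl (fun f _ => h1 f)
      _ = ∑ s ∈ range n, ∑ f : Fin n → Fin p, if s < M f then 1 else 0 := Finset.sum_comm
      _ = _ := Finset.sum_congr rfl (fun s _ => (Finset.card_filter _ _).symm)
  set c : ℕ → ℕ := fun s => (Finset.univ.filter fun f : Fin n → Fin p => s < M f).card with hc
  have hppos : (0:ℝ) < p := by exact_mod_cast hp
  have hpn_pos : (0:ℝ) < (p:ℝ)^n := by positivity
  -- crude bound
  have hc1 : ∀ s, (c s : ℝ) ≤ (p:ℝ)^n := by
    intro s
    have : c s ≤ p^n := by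
      calc c s ≤ (Finset.univ : Finset (Fin n → Fin p)).card :=
          Finset.card_le_card (filter_subset _ _)
        _ = p^n := by simp [Finset.card_univ]
    exact_mod_cast this
  -- tail bound
  set t : ℕ := 6*(n/p) + Nat.log 2 p + 7 with ht
  have hc2 : ∀ s, t ≤ s → (c s : ℝ) ≤ (p:ℝ)^n * ((p:ℝ) * (1/2)^(s+1)) := by
    intro s hs
    have hk6 : 6*n ≤ p*(s+1) := by
      have hmod : p * (n/p) + n % p = n := Nat.div_add_mod n p
      have hmlt : n % p < p := Nat.mod_lt n hp
      have : t + 1 ≤ s + 1 := by omega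
      calc 6*n = 6*(p*(n/p)) + 6*(n%p) := by omega
        _ ≤ 6*(p*(n/p)) + 6*p := by omega
        _ ≤ p * (6*(n/p) + 7) := by ring_nf; omega
        _ ≤ p * (s+1) := Nat.mul_le_mul_left p (by omega)
    -- c s ≤ p * (choose(n,s+1) * p^(n-(s+1)))
    have hnat : c s ≤ p * (n.choose (s+1) * p^(n-(s+1))) := by
      have hsub : (Finset.univ.filter fun f : Fin n → Fin p => s < M f)
          ⊆ (Finset.univ : Finset (Fin p)).biUnion (fun j =>
            Finset.univ.filter fun f : Fin n → Fin p =>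
              s+1 ≤ (Finset.univ.filter fun i => f i = j).card) := by
        intro f hf
        simp only [mem_filter, mem_univ, true_and] at hf
        rw [hM] at hf
        obtain ⟨j, -, hj⟩ := Finset.lt_sup_iff.1 hf
        refine Finset.mem_biUnion.2 ⟨j, Finset.mem_univ _, ?_⟩
        simp only [mem_filter, mem_univ, true_and]
        exact hj
      have hb := Finset.card_le_card hsub
      have hbu : ((Finset.univ : Finset (Fin p)).biUnion (fun j =>
            Finset.univ.filter fun f : Fin n → Fin p =>
              s+1 ≤ (Finset.univ.filter fun i => f i = j).card)).card
          ≤ ∑ j : Fin p, (Finset.univ.filter fun f : Fin n → Fin p =>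
              s+1 ≤ (Finset.univ.filter fun i => f i = j).card).card :=
        Finset.card_biUnion_le
      calc c s ≤ _ := hb
        _ ≤ ∑ j : Fin p, (Finset.univ.filter fun f : Fin n → Fin p =>
              s+1 ≤ (Finset.univ.filter fun i => f i = j).card).card :=
          hbu
        _ ≤ ∑ _j : Fin p, n.choose (s+1) * p^(n-(s+1)) :=
          Finset.sum_le_sum (fun j _ => card_load_ge n p (s+1) j)
        _ = p * (n.choose (s+1) * p^(n-(s+1))) := by
          rw [Finset.sum_const, Finset.card_univ, Fintype.card_fin, smul_eq_mul]
    by_cases hsn : s < n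
    · have hk1n : s + 1 ≤ n := hsn
      have hkey := bib_key n p (s+1) hp hk6
      have hcast : (c s : ℝ) ≤ (p:ℝ) * ((n.choose (s+1):ℝ) * (p:ℝ)^(n-(s+1))) := by
        exact_mod_cast hnat
      have hpowsplit : (p:ℝ)^(s+1) * (p:ℝ)^(n-(s+1)) = (p:ℝ)^n := by
        rw [← pow_add]; congr 1; omega
      have hpnneg : (0:ℝ) ≤ (p:ℝ)^(n-(s+1)) := by positivity
      calc (c s : ℝ) ≤ (p:ℝ) * ((n.choose (s+1):ℝ) * (p:ℝ)^(n-(s+1))) := hcast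
        _ ≤ (p:ℝ) * (((1/2)^(s+1) * (p:ℝ)^(s+1)) * (p:ℝ)^(n-(s+1))) := by
            apply mul_le_mul_of_nonneg_left _ (le_of_lt hppos)
            exact mul_le_mul_of_nonneg_right hkey hpnneg
        _ = (p:ℝ)^n * ((p:ℝ) * (1/2)^(s+1)) := by
            rw [mul_assoc ((1/2:ℝ)^(s+1))]
            rw [hpowsplit]; ring
    · -- s ≥ n : c s = 0
      have : c s = 0 := by
        rw [hc]
        apply Finset.card_eq_zero.2
        apply Finset.filter_eq_empty_iff.2
        intro f _
        have := hMle f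
        omega
      rw [this]
      simp only [Nat.cast_zero]
      positivity
  -- sum bound
  have hsplit := Finset.sum_filter_add_sum_filter_not (range n) (fun s => s < t)
      (fun s => (c s : ℝ))
  have hhead : ∑ s ∈ (range n).filter (fun s => s < t), (c s : ℝ) ≤ (t:ℝ) * (p:ℝ)^n := by
    calc ∑ s ∈ (range n).filter (fun s => s < t), (c s : ℝ)
        ≤ ∑ _s ∈ (range n).filter (fun s => s < t), (p:ℝ)^n :=
        Finset.sum_le_sum (fun s _ => hc1 s)
      _ = ((range n).filter (fun s => s < t)).card * (p:ℝ)^n := by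
          rw [Finset.sum_const, nsmul_eq_mul]
      _ ≤ (t:ℝ) * (p:ℝ)^n := by
          apply mul_le_mul_of_nonneg_right _ (le_of_lt hpn_pos)
          have : ((range n).filter (fun s => s < t)).card ≤ t := by
            calc _ ≤ (range t).card := Finset.card_le_card (by
                intro x hx; simp only [mem_filter, mem_range] at hx ⊢; omega)
              _ = t := Finset.card_range t
          exact_mod_cast this
  have htail : ∑ s ∈ (range n).filter (fun s => ¬ s < t), (c s : ℝ) ≤ (p:ℝ)^n := by
    have hgeo : ∑ s ∈ (range n).filter (fun s => ¬ s < t), ((1:ℝ)/2)^(s+1) ≤ (1/2)^t := by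
      have hsub : (range n).filter (fun s => ¬ s < t) ⊆ Ico t n := by
        intro x hx; simp only [mem_filter, mem_range] at hx; simp [mem_Ico]; omega
      calc ∑ s ∈ (range n).filter (fun s => ¬ s < t), ((1:ℝ)/2)^(s+1)
          ≤ ∑ s ∈ Ico t n, ((1:ℝ)/2)^(s+1) :=
            Finset.sum_le_sum_of_subset_of_nonneg hsub (fun i _ _ => by positivity)
        _ = ∑ i ∈ range (n - t), ((1:ℝ)/2)^(t + i + 1) := Finset.sum_Ico_eq_sum_range _ t n
        _ = (1/2)^(t+1) * ∑ i ∈ range (n - t), ((1:ℝ)/2)^i := by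
            rw [Finset.mul_sum]
            apply Finset.sum_congr rfl
            intro i _
            rw [← pow_add]
            congr 1
            omega
        _ ≤ (1/2)^(t+1) * 2 := by
            apply mul_le_mul_of_nonneg_left _ (by positivity)
            rw [geom_sum_eq (by norm_num : (1/2:ℝ) ≠ 1)]
            have : (0:ℝ) ≤ (1/2:ℝ)^(n-t) := by positivity
            rw [div_le_iff_of_neg (by norm_num)]
            nlinarith
        _ = (1/2)^t := by ring
    have hp2t : (p:ℝ) * (1/2)^t ≤ 1 := by
      have h1 : p < 2^(Nat.log 2 p + 1) := Nat.lt_pow_succ_log_self (by norm_num) p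
      have h2 : (2:ℕ)^(Nat.log 2 p + 1) ≤ 2^t := Nat.pow_le_pow_right (by norm_num) (by omega)
      have h3 : (p:ℝ) ≤ 2^t := by
        have : p ≤ 2^t := by omega
        exact_mod_cast this
      have h4 : ((1:ℝ)/2)^t = ((2:ℝ)^t)⁻¹ := by
        rw [div_pow, one_pow, one_div]
      rw [h4]
      rw [mul_inv_le_iff₀ (by positivity)]
      simpa using h3
    calc ∑ s ∈ (range n).filter (fun s => ¬ s < t), (c s : ℝ)
        ≤ ∑ s ∈ (range n).filter (fun s => ¬ s < t), (p:ℝ)^n * ((p:ℝ) * (1/2)^(s+1)) :=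
          Finset.sum_le_sum (fun s hs => hc2 s (by
            simp only [mem_filter, mem_range] at hs; omega))
      _ = (p:ℝ)^n * (p:ℝ) * ∑ s ∈ (range n).filter (fun s => ¬ s < t), ((1:ℝ)/2)^(s+1) := by
          rw [Finset.mul_sum]; apply Finset.sum_congr rfl; intro s _; ring
      _ ≤ (p:ℝ)^n * (p:ℝ) * (1/2)^t := by
          apply mul_le_mul_of_nonneg_left hgeo (by positivity)
      _ = (p:ℝ)^n * ((p:ℝ) * (1/2)^t) := by ring
      _ ≤ (p:ℝ)^n * 1 := mul_le_mul_of_nonneg_left hp2t (le_of_lt hpn_pos)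
      _ = (p:ℝ)^n := mul_one _
  -- assemble
  have hsum : (∑ f : Fin n → Fin p, (M f : ℝ)) ≤ ((t:ℝ) + 1) * (p:ℝ)^n := by
    have : (∑ f : Fin n → Fin p, (M f : ℝ)) = ∑ s ∈ range n, (c s : ℝ) := by
      rw [← Nat.cast_sum, hlayer, Nat.cast_sum]
    rw [this, ← hsplit]
    calc _ ≤ (t:ℝ) * (p:ℝ)^n + (p:ℝ)^n := add_le_add hhead htail
      _ = ((t:ℝ) + 1) * (p:ℝ)^n := by ring
  have hexp : expMaxOcc n p ≤ (t:ℝ) + 1 := by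
    rw [expMaxOcc, div_le_iff₀ hpn_pos]
    exact hsum
  -- final comparison
  have hnp1 : (1:ℝ) ≤ (n:ℝ)/p := by
    rw [le_div_iff₀ hppos]
    have : (p:ℝ) ≤ n := by exact_mod_cast hpn
    linarith
  have hlogp : (0:ℝ) ≤ Real.log p := Real.log_natCast_nonneg p
  have hlognat : (Nat.log 2 p : ℝ) ≤ 2 * Real.log p := by
    have h1 : (2:ℕ)^(Nat.log 2 p) ≤ p := Nat.pow_log_le_self 2 (by omega)
    have h2 : ((2:ℝ))^(Nat.log 2 p) ≤ (p:ℝ) := by exact_mod_cast h1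
    have h3 : (Nat.log 2 p : ℝ) * Real.log 2 ≤ Real.log p := by
      rw [← Real.log_pow]
      exact Real.log_le_log (by positivity) h2
    have h4 := Real.log_two_gt_d9
    nlinarith [(Nat.cast_nonneg (Nat.log 2 p) : (0:ℝ) ≤ (Nat.log 2 p : ℝ))]
  have hdiv : ((n/p : ℕ) : ℝ) ≤ (n:ℝ)/p := Nat.cast_div_le
  calc expMaxOcc n p ≤ (t:ℝ) + 1 := hexp
    _ = 6*((n/p : ℕ):ℝ) + (Nat.log 2 p : ℝ) + 8 := by rw [ht]; push_cast; ring
    _ ≤ 6*((n:ℝ)/p) + 2*Real.log p + 8 := by linarith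
    _ ≤ 100 * ((n:ℝ)/p + Real.log p) := by nlinarith
end

section
/- Consider n items each with a work value in [0, ŵ] and total work w = Σ w_i, assigned independently and uniformly at random to p bins. The expected maximum total work in any bin is at most ŵ times the expected maximum occupancy when placing ⌈w/ŵ⌉ balls into p bins. -/
open Finset
open scoped BigOperators

lemma expect_comp_restrict {ι β M : Type*} [Fintype ι] [DecidableEq ι] [Fintype β] [Nonempty β]
    [AddCommMonoid M] [Module ℚ≥0 M] (P : ι → Prop) [DecidablePred P] (G : ({i // P i} → β) → M) :
    𝔼 f : ι → β, G (fun i => f i) = 𝔼 g : {i // P i} → β, G g := by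
  rw [Fintype.expect_equiv (Equiv.piEquivPiSubtypeProd P fun _ => β) (fun f => G fun i => f i)
      (fun x => G x.1) fun _ => rfl, ← univ_product_univ, expect_product' univ univ fun g _ => G g]
  simp only [expect_const univ_nonempty]

section MaxLoad

variable {ι κ β : Type*} [Fintype ι] [Fintype κ] [Fintype β] [Nonempty β] [DecidableEq β]

noncomputable def maxLoad (w : ι → ℝ) (f : ι → β) : ℝ :=
  univ.sup' univ_nonempty fun j => ∑ i ∈ univ.filter fun i => f i = j, w i

lemma maxLoad_smul_add_smul_le (u v : ι → ℝ) (f : ι → β) {a b : ℝ} (ha : 0 ≤ a) (hb : 0 ≤ b) :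
    maxLoad (a • u + b • v) f ≤ a * maxLoad u f + b * maxLoad v f := by
  refine sup'_le _ _ fun j _ => ?_
  simp only [Pi.add_apply, Pi.smul_apply, smul_eq_mul, sum_add_distrib, ← mul_sum]
  gcongr
  exacts [le_sup' (fun j => ∑ i ∈ univ.filter fun i => f i = j, u i) (mem_univ j),
    le_sup' (fun j => ∑ i ∈ univ.filter fun i => f i = j, v i) (mem_univ j)]

lemma maxLoad_const_mul {c : ℝ} (hc : 0 ≤ c) (w : ι → ℝ) (f : ι → β) :
    maxLoad (fun i => c * w i) f = c * maxLoad w f := by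
  simp only [maxLoad, ← mul_sum, mul₀_sup' hc]

lemma maxLoad_comp_equiv (e : κ ≃ ι) (w : ι → ℝ) (f : ι → β) :
    maxLoad (w ∘ e) (f ∘ e) = maxLoad w f := by
  simp only [maxLoad, Function.comp_apply, sum_filter]
  congr! 2 with j
  exact e.sum_comp fun i => if f i = j then w i else 0

lemma maxLoad_eq_of_support_subset {T : Finset ι} {w : ι → ℝ} (hw : ∀ i ∉ T, w i = 0)
    (f : ι → β) : maxLoad w f = maxLoad (fun i : T => w i) (fun i => f i) := by
  simp only [maxLoad, sum_filter]
  congr! 2 with j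
  rw [sum_coe_sort T fun i => if f i = j then w i else 0]
  exact (sum_subset (subset_univ T) fun i _ hi => by simp [hw i hi]).symm

lemma maxLoad_mono {u v : ι → ℝ} (huv : u ≤ v) (f : ι → β) : maxLoad u f ≤ maxLoad v f :=
  sup'_mono_fun fun _ _ => sum_le_sum fun i _ => huv i

lemma maxLoad_one (g : ι → β) :
    maxLoad (fun _ => 1) g = (((univ.sup fun j => #{i | g i = j}) : ℕ) : ℝ) := by
  simp only [maxLoad, sum_const, nsmul_eq_mul, mul_one, ← sup'_eq_sup univ_nonempty,
    Nat.cast_finsetSup']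

variable [DecidableEq ι] [DecidableEq κ]

variable (β) in
noncomputable def expectedMaxLoad (w : ι → ℝ) : ℝ :=
  𝔼 f : ι → β, maxLoad w f

lemma convexOn_expectedMaxLoad : ConvexOn ℝ Set.univ (expectedMaxLoad β : (ι → ℝ) → ℝ) := by
  refine ⟨convex_univ, fun u _ v _ a b ha hb _ => ?_⟩
  simp only [expectedMaxLoad, smul_eq_mul, mul_expect, ← expect_add_distrib]
  exact expect_le_expect fun f _ => maxLoad_smul_add_smul_le u v f ha hb

lemma expectedMaxLoad_mono : Monotone (expectedMaxLoad β : (ι → ℝ) → ℝ) :=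
  fun _ _ huv => expect_le_expect fun f _ => maxLoad_mono huv f

lemma expectedMaxLoad_const_mul {c : ℝ} (hc : 0 ≤ c) (w : ι → ℝ) :
    expectedMaxLoad β (fun i => c * w i) = c * expectedMaxLoad β w := by
  simp only [expectedMaxLoad, maxLoad_const_mul hc, mul_expect]

lemma expectedMaxLoad_comp_equiv (e : κ ≃ ι) (w : ι → ℝ) :
    expectedMaxLoad β (w ∘ e) = expectedMaxLoad β w :=
  Fintype.expect_equiv (e.arrowCongr (Equiv.refl β)) _ (maxLoad w) fun g => by
    rw [← maxLoad_comp_equiv e w]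
    congr 1; ext; simp

lemma expMaxOcc_eq_expectedMaxLoad (m p : ℕ) [NeZero p] :
    expMaxOcc m p = expectedMaxLoad (Fin p) (fun _ : Fin m => (1 : ℝ)) := by
  simp [expMaxOcc, expectedMaxLoad, Fintype.expect_eq_sum_div_card, maxLoad_one]

lemma expectedMaxLoad_eq_of_support_subset {T : Finset ι} {w : ι → ℝ}
    (hw : ∀ i ∉ T, w i = 0) : expectedMaxLoad β w = expectedMaxLoad β (fun i : T => w i) := by
  simp only [expectedMaxLoad, maxLoad_eq_of_support_subset hw]
  convert expect_comp_restrict (· ∈ T) (maxLoad (β := β) fun i : T => w i)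

lemma expectedMaxLoad_ite_mem {p : ℕ} [NeZero p] (T : Finset ι) {c : ℝ} (hc : 0 ≤ c) :
    expectedMaxLoad (Fin p) (fun i => if i ∈ T then c else 0) = c * expMaxOcc #T p := by
  calc expectedMaxLoad (Fin p) (fun i => if i ∈ T then c else 0)
      = expectedMaxLoad (Fin p) (fun _ : T => c * 1) := by
        rw [expectedMaxLoad_eq_of_support_subset fun i hi => if_neg hi]
        simp
    _ = c * expectedMaxLoad (Fin p) ((fun _ : Fin #T => (1 : ℝ)) ∘ T.equivFin) := by
        rw [expectedMaxLoad_const_mul hc]; rfl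
    _ = c * expMaxOcc #T p := by
        rw [expectedMaxLoad_comp_equiv, expMaxOcc_eq_expectedMaxLoad]

end MaxLoad

section FractionalCoordinates

variable {ι : Type*} [DecidableEq ι] {c : ℝ}

def shiftMass (i k : ι) (t : ℝ) (v : ι → ℝ) : ι → ℝ := v + t • (Pi.single i 1 - Pi.single k 1)

variable {i k j : ι} {t : ℝ} {v : ι → ℝ}

lemma shiftMass_apply_left (hik : i ≠ k) : shiftMass i k t v i = v i + t := by
  simp [shiftMass, hik]

lemma shiftMass_apply_right (hik : i ≠ k) : shiftMass i k t v k = v k - t := by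
  simp [shiftMass, hik.symm, sub_eq_add_neg]

lemma shiftMass_apply_of_ne (hi : j ≠ i) (hk : j ≠ k) : shiftMass i k t v j = v j := by
  simp [shiftMass, hi, hk]

lemma mem_segment_shiftMass {a b : ℝ} (ha : a ≤ 0) (hb : 0 ≤ b) :
    v ∈ segment ℝ (shiftMass i k a v) (shiftMass i k b v) := by
  have h0 : (0 : ℝ) ∈ segment ℝ a b := by
    rw [segment_eq_Icc (ha.trans hb)]; exact ⟨ha, hb⟩
  obtain ⟨α, β, hα, hβ, hαβ, hab⟩ := h0
  refine ⟨α, β, hα, hβ, hαβ, ?_⟩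
  simp only [shiftMass]
  linear_combination (norm := module) hαβ • v + hab • (Pi.single i 1 - Pi.single k 1 : ι → ℝ)

lemma shiftMass_mem_Icc (hv : v ∈ Set.Icc 0 fun _ => c) (hik : i ≠ k)
    (hi : v i + t ∈ Set.Icc 0 c) (hk : v k - t ∈ Set.Icc 0 c) :
    shiftMass i k t v ∈ Set.Icc 0 fun _ => c := by
  have hmem : ∀ j, shiftMass i k t v j ∈ Set.Icc 0 c := by
    intro j
    by_cases hji : j = i
    · rwa [hji, shiftMass_apply_left hik]
    by_cases hjk : j = k
    · rwa [hjk, shiftMass_apply_right hik]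
    rw [shiftMass_apply_of_ne hji hjk]
    exact ⟨hv.1 j, hv.2 j⟩
  exact ⟨fun j => (hmem j).1, fun j => (hmem j).2⟩

variable [Fintype ι]

noncomputable def fracCoords (c : ℝ) (v : ι → ℝ) : Finset ι := {i | v i ∈ Set.Ioo 0 c}

lemma sum_shiftMass : ∑ j, shiftMass i k t v j = ∑ j, v j := by
  simp [shiftMass, sum_add_distrib, ← mul_sum]

lemma card_fracCoords_shiftMass_lt (hik : i ≠ k) (hi : i ∈ fracCoords c v)
    (hk : k ∈ fracCoords c v) (h : v i + t ∉ Set.Ioo 0 c ∨ v k - t ∉ Set.Ioo 0 c) :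
    #(fracCoords c (shiftMass i k t v)) < #(fracCoords c v) := by
  have hsub : fracCoords c (shiftMass i k t v) ⊆ fracCoords c v := by
    intro j hj
    by_cases hji : j = i
    · exact hji ▸ hi
    by_cases hjk : j = k
    · exact hjk ▸ hk
    simpa [fracCoords, shiftMass_apply_of_ne hji hjk] using hj
  refine card_lt_card ((ssubset_iff_of_subset hsub).mpr ?_)
  rcases h with h | h
  · exact ⟨i, hi, by simpa [fracCoords, shiftMass_apply_left hik] using h⟩
  · exact ⟨k, hk, by simpa [fracCoords, shiftMass_apply_right hik] using h⟩

theorem mem_convexHull_card_fracCoords_le_one {w : ι → ℝ} (hw : w ∈ Set.Icc 0 fun _ => c) :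
    w ∈ convexHull ℝ
      {v | v ∈ Set.Icc 0 (fun _ => c) ∧ ∑ i, v i = ∑ i, w i ∧ #(fracCoords c v) ≤ 1} := by
  induction hN : #(fracCoords c w) using Nat.strong_induction_on generalizing w with
  | _ N ih =>
  by_cases hle : N ≤ 1
  · exact subset_convexHull ℝ _ ⟨hw, rfl, hN ▸ hle⟩
  obtain ⟨i, hi, k, hk, hik⟩ := one_lt_card.mp (hN ▸ not_le.mp hle)
  have hwi : w i ∈ Set.Ioo 0 c := (mem_filter.mp hi).2
  have hwk : w k ∈ Set.Ioo 0 c := (mem_filter.mp hk).2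
  have step : ∀ t, w i + t ∈ Set.Icc 0 c → w k - t ∈ Set.Icc 0 c →
      (w i + t ∉ Set.Ioo 0 c ∨ w k - t ∉ Set.Ioo 0 c) →
      shiftMass i k t w ∈ convexHull ℝ
        {v | v ∈ Set.Icc 0 (fun _ => c) ∧ ∑ i, v i = ∑ i, w i ∧ #(fracCoords c v) ≤ 1} := by
    intro t hti htk hend
    have := ih _ (hN ▸ card_fracCoords_shiftMass_lt hik hi hk hend)
      (shiftMass_mem_Icc hw hik hti htk) rfl
    rwa [sum_shiftMass] at this
  -- `a` and `b` are the extreme shifts keeping both coordinates in `[0, c]`; at each of them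
  -- one of the two coordinates reaches `0` or `c`
  set a := max (-w i) (w k - c)
  set b := min (c - w i) (w k)
  have ha : a ≤ 0 := max_le (by linarith [hwi.1]) (by linarith [hwk.2])
  have hb : 0 ≤ b := le_min (by linarith [hwi.2]) hwk.1.le
  have ha₁ : -w i ≤ a := le_max_left _ _
  have ha₂ : w k - c ≤ a := le_max_right _ _
  have hb₁ : b ≤ c - w i := min_le_left _ _
  have hb₂ : b ≤ w k := min_le_right _ _
  refine (convex_convexHull ℝ _).segment_subset (step a ⟨?_, ?_⟩ ⟨?_, ?_⟩ ?_)
    (step b ⟨?_, ?_⟩ ⟨?_, ?_⟩ ?_) (mem_segment_shiftMass ha hb)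
  any_goals linarith [hwi.1, hwi.2, hwk.1, hwk.2]
  · rcases max_choice (-w i) (w k - c) with h | h
    · left; simp [a, h]
    · right; simp [a, h]
  · rcases min_choice (c - w i) (w k) with h | h
    · left; simp [b, h]
    · right; simp [b, h]

lemma card_pos_le_ceil_sum_div (hc : 0 < c) (hv : v ∈ Set.Icc 0 fun _ => c)
    (hfrac : #(fracCoords c v) ≤ 1) : #{i | 0 < v i} ≤ ⌈(∑ i, v i) / c⌉₊ := by
  set S : Finset ι := {i | 0 < v i}
  rcases S.eq_empty_or_nonempty with hS | hS
  · simp [hS]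
  obtain ⟨i₀, hi₀, hfrac₀⟩ : ∃ i₀ ∈ S, ∀ j ∈ fracCoords c v, j = i₀ := by
    rcases (fracCoords c v).eq_empty_or_nonempty with hF | ⟨i₁, hi₁⟩
    · obtain ⟨i₀, hi₀⟩ := hS
      exact ⟨i₀, hi₀, by simp [hF]⟩
    · exact ⟨i₁, mem_filter.mpr ⟨mem_univ _, (mem_filter.mp hi₁).2.1⟩,
        fun j hj => card_le_one.mp hfrac j hj i₁ hi₁⟩
  have hfull : ∀ j ∈ S.erase i₀, v j = c := by
    intro j hj
    obtain ⟨hji₀, hjS⟩ := mem_erase.mp hj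
    refine (hv.2 j).antisymm (not_lt.mp fun hlt => hji₀ (hfrac₀ j ?_))
    exact mem_filter.mpr ⟨mem_univ _, (mem_filter.mp hjS).2, hlt⟩
  have hlt : ((#(S.erase i₀) : ℕ) : ℝ) < (∑ i, v i) / c := by
    rw [lt_div_iff₀ hc]
    calc (#(S.erase i₀) : ℝ) * c = ∑ j ∈ S.erase i₀, v j := by
          rw [sum_congr rfl hfull, sum_const, nsmul_eq_mul]
      _ < v i₀ + ∑ j ∈ S.erase i₀, v j := lt_add_of_pos_left _ (mem_filter.mp hi₀).2
      _ = ∑ j ∈ S, v j := add_sum_erase S v hi₀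
      _ ≤ ∑ i, v i := sum_le_sum_of_subset_of_nonneg (subset_univ S) fun j _ _ => hv.1 j
  have := Nat.lt_ceil.mpr hlt
  rw [card_erase_of_mem hi₀] at this
  omega

end FractionalCoordinates

lemma ceil_sum_div_le_card {ι : Type*} [Fintype ι] {c : ℝ} {v : ι → ℝ} (hc : 0 < c)
    (hv : v ∈ Set.Icc 0 fun _ => c) :
    ⌈(∑ i, v i) / c⌉₊ ≤ Fintype.card ι := by
  rw [Nat.ceil_le, div_le_iff₀ hc]
  calc ∑ i, v i ≤ ∑ _i : ι, c := sum_le_sum fun i _ => hv.2 i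
    _ = Fintype.card ι * c := by rw [sum_const, card_univ, nsmul_eq_mul]

theorem weighted_max_load_majorization (n p : ℕ) (hp : 0 < p)
    (w : Fin n → ℝ) (wHat : ℝ) (hwHat : 0 < wHat)
    (hw : ∀ i, 0 ≤ w i ∧ w i ≤ wHat) :
    (∑ f : Fin n → Fin p,
        (Finset.univ.sup' (Finset.univ_nonempty_iff.mpr ⟨⟨0, hp⟩⟩)
          fun j : Fin p => ∑ i ∈ Finset.univ.filter fun i : Fin n => f i = j, w i))
        / (p : ℝ) ^ n
      ≤ wHat * expMaxOcc ⌈(∑ i, w i) / wHat⌉₊ p := by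
  have : NeZero p := ⟨hp.ne'⟩
  have hwIcc : w ∈ Set.Icc 0 fun _ => wHat := ⟨fun i => (hw i).1, fun i => (hw i).2⟩
  obtain ⟨v, ⟨hv, hvsum, hvfrac⟩, hwv⟩ :=
    (convexOn_expectedMaxLoad (β := Fin p)).exists_ge_of_mem_convexHull (Set.subset_univ _)
      (mem_convexHull_card_fracCoords_le_one hwIcc)
  obtain ⟨T, hsupp, hT⟩ := exists_superset_card_eq (card_pos_le_ceil_sum_div hwHat hv hvfrac)
    (by simpa [hvsum] using ceil_sum_div_le_card hwHat hwIcc)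
  have hvT : v ≤ fun i => if i ∈ T then wHat else 0 := by
    intro i
    by_cases hi : i ∈ T
    · simpa [hi] using hv.2 i
    · have : ¬ 0 < v i := fun hpos => hi (hsupp (mem_filter.mpr ⟨mem_univ _, hpos⟩))
      simpa [hi] using this
  calc _ = expectedMaxLoad (Fin p) w := by
        simp [expectedMaxLoad, maxLoad, Fintype.expect_eq_sum_div_card]
    _ ≤ expectedMaxLoad (Fin p) v := hwv
    _ ≤ expectedMaxLoad (Fin p) (fun i => if i ∈ T then wHat else 0) := expectedMaxLoad_mono hvT
    _ = wHat * expMaxOcc ⌈(∑ i, w i) / wHat⌉₊ p := by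
        rw [expectedMaxLoad_ite_mem T hwHat.le, hT, hvsum]
end

section
/- Let B be a finite multiset of key–value pairs with keys in K, and suppose each key k has data volume v(k) ≤ m̂, with total volume m' = Σ_k v(k). Order the keys by an injective function h and assign key k to processor 1 + ⌊p·n(k)/m'⌋ where n(k) = Σ_{x : h(x) < h(k)} v(x). Then each processor is assigned keys of total volume at most m'/p + m̂. -/
theorem prefix_sum_assignment_balance {K : Type*} [Fintype K] [DecidableEq K]
    (v : K → ℝ) (mHat : ℝ) (hv : ∀ k, 0 ≤ v k ∧ v k ≤ mHat)
    (m' : ℝ) (hm' : m' = ∑ k, v k) (hm'pos : 0 < m')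
    (p : ℕ) (hp : 0 < p)
    (h : K → ℕ) (hinj : Function.Injective h)
    (n : K → ℝ) (hn : ∀ k, n k = ∑ x ∈ Finset.univ.filter fun x => h x < h k, v x) :
    ∀ i : ℕ, ∑ k ∈ Finset.univ.filter fun k => 1 + ⌊(p : ℝ) * n k / m'⌋₊ = i, v k
      ≤ m' / p + mHat := by
  intro i
  have hK : Nonempty K := by
    by_contra hK
    rw [not_nonempty_iff] at hK
    rw [hm', Finset.sum_of_isEmpty] at hm'pos
    exact lt_irrefl 0 hm'pos
  have hmHat : 0 ≤ mHat := le_trans (hv (Classical.arbitrary K)).1 (hv _).2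
  have hpp : (0:ℝ) < p := by exact_mod_cast hp
  have hRHS : 0 ≤ m' / p + mHat := by positivity
  set T := Finset.univ.filter fun k => 1 + ⌊(p : ℝ) * n k / m'⌋₊ = i with hT
  rcases T.eq_empty_or_nonempty with hTe | hTne
  · rw [hTe]; simpa using hRHS
  obtain ⟨kmin, hkminT, hkmin⟩ := T.exists_min_image h hTne
  obtain ⟨kmax, hkmaxT, hkmax⟩ := T.exists_max_image h hTne
  have hi : 1 ≤ i := by
    have := (Finset.mem_filter.mp hkminT).2
    omega
  have hn0 : ∀ k, 0 ≤ n k := fun k => by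
    rw [hn]; exact Finset.sum_nonneg fun x _ => (hv x).1
  have hfloor : ∀ k ∈ T, ((i:ℝ) - 1) * m' / p ≤ n k ∧ n k < i * m' / p := by
    intro k hk
    have hk' := (Finset.mem_filter.mp hk).2
    have hfe : ⌊(p : ℝ) * n k / m'⌋₊ = i - 1 := by omega
    have hx0 : 0 ≤ (p:ℝ) * n k / m' := div_nonneg (mul_nonneg hpp.le (hn0 k)) hm'pos.le
    obtain ⟨h1, h2⟩ := (Nat.floor_eq_iff hx0).mp hfe
    have hc : ((i - 1 : ℕ) : ℝ) = (i:ℝ) - 1 := by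
      push_cast [Nat.cast_sub hi]; ring
    rw [hc] at h1
    have hc2 : ((i - 1 : ℕ) : ℝ) + 1 = (i:ℝ) := by
      push_cast [Nat.cast_sub hi]; ring
    rw [hc2] at h2
    rw [le_div_iff₀ hm'pos] at h1
    rw [div_lt_iff₀ hm'pos] at h2
    constructor
    · rw [div_le_iff₀ hpp]; nlinarith
    · rw [lt_div_iff₀ hpp]; nlinarith
  -- split off kmax
  have hsplit : v kmax + ∑ x ∈ T.erase kmax, v x = ∑ x ∈ T, v x :=
    Finset.add_sum_erase T v hkmaxT
  set Amax := Finset.univ.filter fun x => h x < h kmax with hAmax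
  set Amin := Finset.univ.filter fun x => h x < h kmin with hAmin
  have hAsub : Amin ⊆ Amax := by
    intro x hx
    simp only [hAmin, hAmax, Finset.mem_filter, Finset.mem_univ, true_and] at hx ⊢
    exact lt_of_lt_of_le hx (hkmin kmax hkmaxT)
  have hsub : T.erase kmax ⊆ Amax \ Amin := by
    intro x hx
    obtain ⟨hxne, hxT⟩ := Finset.mem_erase.mp hx
    have h1 : h x ≤ h kmax := hkmax x hxT
    have h2 : h kmin ≤ h x := hkmin x hxT
    have h3 : h x ≠ h kmax := fun he => hxne (hinj he)
    simp only [Finset.mem_sdiff, hAmax, hAmin, Finset.mem_filter, Finset.mem_univ, true_and]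
    exact ⟨lt_of_le_of_ne h1 h3, not_lt.mpr h2⟩
  have hle1 : ∑ x ∈ T.erase kmax, v x ≤ ∑ x ∈ Amax \ Amin, v x :=
    Finset.sum_le_sum_of_subset_of_nonneg hsub fun x _ _ => (hv x).1
  have hsdiff : ∑ x ∈ Amax \ Amin, v x = n kmax - n kmin := by
    rw [Finset.sum_sdiff_eq_sub hAsub, hn kmax, hn kmin]
  obtain ⟨hminlo, _⟩ := hfloor kmin hkminT
  obtain ⟨_, hmaxhi⟩ := hfloor kmax hkmaxT
  have hdiff : n kmax - n kmin ≤ m' / p := by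
    have : (i:ℝ) * m' / p - ((i:ℝ) - 1) * m' / p = m' / p := by ring
    linarith
  have hvmax : v kmax ≤ mHat := (hv kmax).2
  linarith [hle1, hsdiff ▸ hle1]
end

section
/- In the redundant remapping scheme, the maximum over processors of assigned work is O(w/p + ŵ) and the maximum assigned output volume is O(m/p + m̂), where the hidden constants can be taken as 2 and additive terms ŵ and m̂ respectively: max_i (work of PE i) ≤ 2w'/p + ŵ and max_i (output of PE i) ≤ 2m'/p + m̂, given w' ≤ w and m' ≤ m. -/
/-! Every regular element is charged its combined weight `W a = w a + o a · (w'/m')`, which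
dominates both `w a` and the rescaled output `o a · (w'/m')`. Hence the regular part of each
processor has work at most `W/p = 2w'/p` and output at most `(2w'/p) / (w'/m') = 2m'/p`, and the
single overload element adds at most `ŵ`, respectively `m̂`. -/

open Finset

lemma Option.elim_zero_le {α β : Type*} [Zero β] [LE β] {o : Option α} {f : α → β} {c : β}
    (hc : 0 ≤ c) (hf : ∀ a ∈ o, f a ≤ c) : o.elim 0 f ≤ c := by
  cases o with
  | none => exact hc
  | some a => exact hf a rfl

section WeightedSum

variable {ι R : Type*} [Semiring R] [PartialOrder R] [IsOrderedRing R]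
  {s : Finset ι} {x y : ι → R} {r : R}

lemma Finset.sum_le_sum_add_mul (hy : ∀ a ∈ s, 0 ≤ y a) (hr : 0 ≤ r) :
    ∑ a ∈ s, x a ≤ ∑ a ∈ s, (x a + y a * r) :=
  sum_le_sum fun a ha => le_add_of_nonneg_right (mul_nonneg (hy a ha) hr)

lemma Finset.sum_mul_le_sum_add_mul (hx : ∀ a ∈ s, 0 ≤ x a) :
    (∑ a ∈ s, y a) * r ≤ ∑ a ∈ s, (x a + y a * r) := by
  rw [sum_mul]
  exact sum_le_sum fun a ha => le_add_of_nonneg_left (hx a ha)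

end WeightedSum

theorem redundant_remapping_max_bounds_general {α : Type*} (A : Finset α) (w_ o_ : α → ℝ)
    (hw : ∀ a ∈ A, 0 ≤ w_ a) (ho : ∀ a ∈ A, 0 ≤ o_ a)
    (wHat mHat : ℝ) (hwHat : ∀ a ∈ A, w_ a ≤ wHat) (hmHat : ∀ a ∈ A, o_ a ≤ mHat)
    (w' m' : ℝ) (hw' : w' = ∑ a ∈ A, w_ a)
    (hw'pos : 0 < w') (hm'pos : 0 < m')
    (W : α → ℝ) (hW : ∀ a, W a = w_ a + o_ a * (w' / m'))
    (Wtot : ℝ) (hWtot : Wtot = 2 * w')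
    (p : ℕ) (hp : 0 < p)
    (R : Fin p → Finset α) (hR : ∀ i, R i ⊆ A)
    (ov : Fin p → Option α) (hov : ∀ i, ∀ a ∈ (ov i), a ∈ A)
    (hbal : ∀ i, ∑ a ∈ R i, W a ≤ Wtot / p) :
    (Finset.univ.sup' (Finset.univ_nonempty_iff.mpr ⟨⟨0, hp⟩⟩)
        fun i : Fin p => (∑ a ∈ R i, w_ a) + (ov i).elim 0 w_) ≤ 2 * w' / p + wHat ∧
    (Finset.univ.sup' (Finset.univ_nonempty_iff.mpr ⟨⟨0, hp⟩⟩)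
        fun i : Fin p => (∑ a ∈ R i, o_ a) + (ov i).elim 0 o_) ≤ 2 * m' / p + mHat := by
  obtain ⟨a₀, ha₀⟩ : A.Nonempty := nonempty_of_sum_ne_zero (hw' ▸ hw'pos.ne')
  have hr : 0 < w' / m' := div_pos hw'pos hm'pos
  have hbal' : ∀ i, ∑ a ∈ R i, (w_ a + o_ a * (w' / m')) ≤ 2 * w' / p := fun i => by
    simpa only [hW, hWtot] using hbal i
  have hrescale : 2 * w' / p = 2 * m' / p * (w' / m') := by field_simp
  refine ⟨sup'_le _ _ fun i _ => add_le_add ?_ ?_, sup'_le _ _ fun i _ => add_le_add ?_ ?_⟩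
  · exact (sum_le_sum_add_mul (fun a ha => ho a (hR i ha)) hr.le).trans (hbal' i)
  · exact Option.elim_zero_le ((hw a₀ ha₀).trans (hwHat a₀ ha₀)) fun a ha => hwHat a (hov i a ha)
  · have h := (sum_mul_le_sum_add_mul fun a ha => hw a (hR i ha)).trans (hbal' i)
    exact le_of_mul_le_mul_right (hrescale ▸ h) hr
  · exact Option.elim_zero_le ((ho a₀ ha₀).trans (hmHat a₀ ha₀)) fun a ha => hmHat a (hov i a ha)

theorem redundant_remapping_max_bounds {α : Type*} (A : Finset α) (w_ o_ : α → ℝ)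
    (hw : ∀ a ∈ A, 0 ≤ w_ a) (ho : ∀ a ∈ A, 0 ≤ o_ a)
    (wHat mHat : ℝ) (hwHat : ∀ a ∈ A, w_ a ≤ wHat) (hmHat : ∀ a ∈ A, o_ a ≤ mHat)
    (w' m' w m : ℝ) (hw' : w' = ∑ a ∈ A, w_ a) (hm' : m' = ∑ a ∈ A, o_ a)
    (hw'pos : 0 < w') (hm'pos : 0 < m') (hw'le : w' ≤ w) (hm'le : m' ≤ m)
    (W : α → ℝ) (hW : ∀ a, W a = w_ a + o_ a * (w' / m'))
    (Wtot : ℝ) (hWtot : Wtot = 2 * w')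
    (p : ℕ) (hp : 0 < p)
    (R : Fin p → Finset α) (hR : ∀ i, R i ⊆ A)
    (ov : Fin p → Option α) (hov : ∀ i, ∀ a ∈ (ov i), a ∈ A)
    (hbal : ∀ i, ∑ a ∈ R i, W a ≤ Wtot / p) :
    (Finset.univ.sup' (Finset.univ_nonempty_iff.mpr ⟨⟨0, hp⟩⟩)
        fun i : Fin p => (∑ a ∈ R i, w_ a) + (ov i).elim 0 w_) ≤ 2 * w' / p + wHat ∧
    (Finset.univ.sup' (Finset.univ_nonempty_iff.mpr ⟨⟨0, hp⟩⟩)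
        fun i : Fin p => (∑ a ∈ R i, o_ a) + (ov i).elim 0 o_) ≤ 2 * m' / p + mHat :=
  redundant_remapping_max_bounds_general A w_ o_ hw ho wHat mHat hwHat hmHat w' m' hw' hw'pos hm'pos
    W hW Wtot hWtot p hp R hR ov hov hbal
end
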